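/- Suppose T_Z is invertible and ‖A(m,n)x‖_m ≤ M(m/n)^a‖x‖_n for m ≥ n. Then there exist D, λ > 0 such that ‖A(m,n)x‖_m ≥ (1/D)(m/n)^{λ}‖x‖_n for all m ≥ n and x ∈ Z(n) = A(n,1)Z. -/
import Mathlib


open scoped BigOperators

variable {X : Type*} [NormedAddCommGroup X] [NormedSpace ℝ X]

/-- The cocycle generated by a sequence of bounded operators:
`coc A n m = 𝓐(m,n) = A_{m-1} ⋯ A_n` for `m > n`, and `= Id` for `m ≤ n`. -/
def coc (A : ℕ → X →L[ℝ] X) (n : ℕ) : ℕ → X →L[ℝ] X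
  | 0 => 1
  | m + 1 => if n ≤ m then (A m).comp (coc A n m) else 1

/-- The formal difference operator: `(T x)_1 = 0` and
`(T x)_{m+1} = (m+1)(x_{m+1} - A_m x_m)` for `m ≥ 1`. -/
noncomputable def TOp (A : ℕ → X →L[ℝ] X) (x : ℕ → X) : ℕ → X :=
  fun m => if m ≤ 1 then 0 else (m : ℝ) • (x m - A (m - 1) (x (m - 1)))

/-- `N` is a family (indexed by `m ≥ 1`) of norms on `X`, each equivalent to `‖·‖`. -/
def NormFamily (N : ℕ → X → ℝ) : Prop :=
  ∀ m, 1 ≤ m →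
    (∀ x y : X, N m (x + y) ≤ N m x + N m y) ∧
    (∀ (c : ℝ) (x : X), N m (c • x) = |c| * N m x) ∧
    (∃ c C : ℝ, 0 < c ∧ ∀ x : X, c * ‖x‖ ≤ N m x ∧ N m x ≤ C * ‖x‖)

/-- Membership in `Y`: `sup_{m ≥ 1} ‖x_m‖_m < ∞`. -/
def MemY (N : ℕ → X → ℝ) (x : ℕ → X) : Prop :=
  ∃ S : ℝ, ∀ m, 1 ≤ m → N m (x m) ≤ S

/-- Membership in `Y₀ = Y_{{0}}`: bounded and `x_1 = 0`. -/
def MemY0 (N : ℕ → X → ℝ) (x : ℕ → X) : Prop := x 1 = 0 ∧ MemY N x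

/-- Membership in `Y_Z`: bounded and `x_1 ∈ Z`. -/
def MemYZ (N : ℕ → X → ℝ) (Z : Set X) (x : ℕ → X) : Prop := x 1 ∈ Z ∧ MemY N x

/-- Membership in the domain `𝒟(T_Z)`: `x ∈ Y_Z` and
`sup_{m ≥ 1} (m+1)‖x_{m+1} - A_m x_m‖_{m+1} < ∞`. -/
def MemD (A : ℕ → X →L[ℝ] X) (N : ℕ → X → ℝ) (Z : Set X) (x : ℕ → X) : Prop :=
  MemYZ N Z x ∧ MemY N (TOp A x)

/-- Polynomial dichotomy (with given projections and constants) with respect to the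
sequence of norms `N`.  The bound along the unstable direction is stated in the
equivalent "forward" form: `‖u‖_m ≤ D (m/n)^λ ‖𝓐(n,m)u‖_n` for `u ∈ Ker P_m`, `m ≤ n`. -/
def PolyDichWith (A : ℕ → X →L[ℝ] X) (N : ℕ → X → ℝ) (P : ℕ → X →L[ℝ] X)
    (D lam : ℝ) : Prop :=
  (∀ m, 1 ≤ m → (P m).comp (P m) = P m) ∧
  (∀ m, 1 ≤ m → (A m).comp (P m) = (P (m + 1)).comp (A m)) ∧
  (∀ m, 1 ≤ m → ∀ y, P (m + 1) y = 0 → ∃! x, P m x = 0 ∧ A m x = y) ∧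
  (∀ m n, 1 ≤ n → n ≤ m → ∀ x : X,
      N m (coc A n m (P n x)) ≤ D * (((m : ℝ) / (n : ℝ)) ^ (-lam)) * N n x) ∧
  (∀ m n, 1 ≤ m → m ≤ n → ∀ u : X, P m u = 0 →
      N m u ≤ D * (((m : ℝ) / (n : ℝ)) ^ lam) * N n (coc A m n u))

/-- `(A_m)` admits a polynomial dichotomy with respect to the sequence of norms `N`. -/
def PolyDich (A : ℕ → X →L[ℝ] X) (N : ℕ → X → ℝ) : Prop :=
  ∃ (P : ℕ → X →L[ℝ] X) (D lam : ℝ), 0 < D ∧ 0 < lam ∧ PolyDichWith A N P D lam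

/-- The stable space `X(n) = {x : sup_{m ≥ n} ‖𝓐(m,n)x‖_m < ∞}`. -/
def Xs (A : ℕ → X →L[ℝ] X) (N : ℕ → X → ℝ) (n : ℕ) : Set X :=
  {x : X | ∃ S : ℝ, ∀ m, n ≤ m → N m (coc A n m x) ≤ S}

/-- The unstable space `Z(n) = 𝓐(n,1) Z`. -/
def Zs (A : ℕ → X →L[ℝ] X) (Z : Set X) (n : ℕ) : Set X := coc A 1 n '' Z

/-- `T_Z : 𝒟(T_Z) → Y₀` is invertible, with `κ` a bound for the norm of its inverse
(with respect to the graph norm on the domain). -/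
def TInv (A : ℕ → X →L[ℝ] X) (N : ℕ → X → ℝ) (Z : Set X) (κ : ℝ) : Prop :=
  (∀ y, MemY0 N y → ∃ x, MemD A N Z x ∧ ∀ m, 1 ≤ m → TOp A x m = y m) ∧
  (∀ x x', MemD A N Z x → MemD A N Z x' →
      (∀ m, 1 ≤ m → TOp A x m = TOp A x' m) → ∀ m, 1 ≤ m → x m = x' m) ∧
  (∀ y x, MemY0 N y → MemD A N Z x → (∀ m, 1 ≤ m → TOp A x m = y m) →
      ∀ S : ℝ, (∀ m, 1 ≤ m → N m (y m) ≤ S) → ∀ m, 1 ≤ m → N m (x m) ≤ κ * S)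

/-- The uniform polynomial growth bound `‖𝓐(m,n)x‖_m ≤ M (m/n)^a ‖x‖_n` for `m ≥ n`. -/
def Grow (A : ℕ → X →L[ℝ] X) (N : ℕ → X → ℝ) (M a : ℝ) : Prop :=
  ∀ m n, 1 ≤ n → n ≤ m → ∀ x : X,
    N m (coc A n m x) ≤ M * (((m : ℝ) / (n : ℝ)) ^ a) * N n x
section Helpers
variable {X : Type*} [NormedAddCommGroup X] [NormedSpace ℝ X]

theorem coc_self (A : ℕ → X →L[ℝ] X) (n : ℕ) : coc A n n = 1 := by
  cases n with
  | zero => rfl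
  | succ k => simp [coc]

theorem coc_succ (A : ℕ → X →L[ℝ] X) {n m : ℕ} (h : n ≤ m) :
    coc A n (m + 1) = (A m).comp (coc A n m) := by
  simp [coc, h]

theorem coc_comp (A : ℕ → X →L[ℝ] X) {l n m : ℕ} (hln : l ≤ n) (hnm : n ≤ m) (v : X) :
    coc A n m (coc A l n v) = coc A l m v := by
  induction m, hnm using Nat.le_induction with
  | base => rw [coc_self]; rfl
  | succ m hm ih =>
      rw [coc_succ A hm, coc_succ A (hln.trans hm)]
      simp [ih]

theorem NF.nonneg {N : ℕ → X → ℝ} (hN : NormFamily N) {m : ℕ} (hm : 1 ≤ m) (x : X) :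
    0 ≤ N m x := by
  obtain ⟨-, -, c, C, hc, hb⟩ := hN m hm
  exact le_trans (by positivity) (hb x).1

theorem NF.zero {N : ℕ → X → ℝ} (hN : NormFamily N) {m : ℕ} (hm : 1 ≤ m) :
    N m (0 : X) = 0 := by
  obtain ⟨-, hs, -⟩ := hN m hm
  have := hs 0 0
  simpa using this

theorem NF.eq_zero {N : ℕ → X → ℝ} (hN : NormFamily N) {m : ℕ} (hm : 1 ≤ m) {x : X}
    (h : N m x = 0) : x = 0 := by
  obtain ⟨-, -, c, C, hc, hb⟩ := hN m hm
  have h1 := (hb x).1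
  rw [h] at h1
  have : ‖x‖ ≤ 0 := by nlinarith [norm_nonneg x]
  simpa [norm_le_zero_iff] using this

theorem NF.smul {N : ℕ → X → ℝ} (hN : NormFamily N) {m : ℕ} (hm : 1 ≤ m) (c : ℝ) (x : X) :
    N m (c • x) = |c| * N m x := ((hN m hm).2.1) c x

end Helpers
section Key
variable {X : Type*} [NormedAddCommGroup X] [NormedSpace ℝ X]

theorem orbit_pos {N : ℕ → X → ℝ} (hN : NormFamily N) (A : ℕ → X →L[ℝ] X)
    (Z : Submodule ℝ X) (κ : ℝ) (hinv : TInv A N (Z : Set X) κ)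
    {z : X} (hz : z ∈ Z) {n : ℕ} (hn : 1 ≤ n) (hne : N n (coc A 1 n z) ≠ 0) :
    ∀ j, 1 ≤ j → 0 < N j (coc A 1 j z) := by
  intro j hj
  rcases (NF.nonneg hN hj (coc A 1 j z)).lt_or_eq with h | h
  · exact h
  exfalso
  have h0 : coc A 1 j z = 0 := NF.eq_zero hN hj h.symm
  set w : ℕ → X := fun i => coc A 1 i z with hw
  have hw0 : ∀ i, j ≤ i → w i = 0 := by
    intro i hi
    show coc A 1 i z = 0
    rw [← coc_comp A hj hi z, h0, map_zero]
  have hT : ∀ i, TOp A w i = 0 := by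
    intro i
    by_cases hi : i ≤ 1
    · simp [TOp, hi]
    · obtain ⟨p, rfl⟩ : ∃ p, i = p + 1 := ⟨i - 1, by omega⟩
      have hp : 1 ≤ p := by omega
      have : w (p + 1) = A p (w p) := by
        show coc A 1 (p+1) z = A p (coc A 1 p z)
        rw [coc_succ A hp]; rfl
      simp [TOp, hi, this]
  have hT0 : ∀ i, TOp A (fun _ => (0:X)) i = 0 := by
    intro i
    by_cases hi : i ≤ 1 <;> simp [TOp, hi]
  have hDw : MemD A N (Z : Set X) w := by
    refine ⟨⟨?_, ?_⟩, ⟨0, fun i hi => by rw [hT]; simp [NF.zero hN hi]⟩⟩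
    · show coc A 1 1 z ∈ (Z : Set X)
      rw [coc_self]; exact hz
    · refine ⟨∑ i ∈ Finset.Icc 1 j, N i (w i), fun i hi => ?_⟩
      by_cases hij : i ≤ j
      · exact Finset.single_le_sum
          (fun p hp => NF.nonneg hN (Finset.mem_Icc.mp hp).1 (w p))
          (Finset.mem_Icc.mpr ⟨hi, hij⟩)
      · rw [hw0 i (by omega), NF.zero hN hi]
        exact Finset.sum_nonneg fun p hp => NF.nonneg hN (Finset.mem_Icc.mp hp).1 (w p)
  have hD0 : MemD A N (Z : Set X) (fun _ => (0:X)) := by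
    refine ⟨⟨Z.zero_mem, ⟨0, fun i hi => by simp [NF.zero hN hi]⟩⟩,
      ⟨0, fun i hi => by rw [hT0]; simp [NF.zero hN hi]⟩⟩
  have := hinv.2.1 w (fun _ => 0) hDw hD0 (fun i _ => by rw [hT, hT0]) n hn
  exact hne (by rw [show coc A 1 n z = w n from rfl, this, NF.zero hN hn])

theorem key_estimate {N : ℕ → X → ℝ} (hN : NormFamily N) (A : ℕ → X →L[ℝ] X)
    (Z : Submodule ℝ X) (κ : ℝ) (hinv : TInv A N (Z : Set X) κ)
    {z : X} (hz : z ∈ Z) (hc : ∀ j, 1 ≤ j → 0 < N j (coc A 1 j z))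
    (k K : ℕ) (hk : 1 ≤ k) :
    N k (coc A 1 k z) * ∑ j ∈ Finset.Icc (k+1) K, 1/((j:ℝ) * N j (coc A 1 j z)) ≤ κ := by
  set c : ℕ → ℝ := fun j => N j (coc A 1 j z) with hcdef
  set α : ℕ → ℝ := fun i => -∑ j ∈ Finset.Icc (max i k + 1) K, 1/((j:ℝ) * c j) with hα
  set x' : ℕ → X := fun i => α i • coc A 1 i z with hx'
  have hins : ∀ p, p ≤ K → Finset.Icc p K = insert p (Finset.Icc (p+1) K) := by
    intro p hp; ext q; simp only [Finset.mem_Icc, Finset.mem_insert]; omega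
  have hdiff : ∀ j, 1 ≤ j → α (j+1) - α j =
      if k+1 ≤ j+1 ∧ j+1 ≤ K then 1/(((j:ℝ)+1) * c (j+1)) else 0 := by
    intro j hj
    rcases le_or_gt (j+1) k with hjk | hjk
    · have h1 : max (j+1) k = k := max_eq_right hjk
      have h2 : max j k = k := max_eq_right (by omega)
      rw [if_neg (by omega)]
      simp only [hα, h1, h2]
      ring
    · have h1 : max (j+1) k = j+1 := max_eq_left (by omega)
      have h2 : max j k = j := max_eq_left (by omega)
      simp only [hα, h1, h2]
      by_cases hjK : j+1 ≤ K
      · rw [if_pos ⟨by omega, hjK⟩, hins (j+1) hjK,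
          Finset.sum_insert (by simp)]
        push_cast
        ring
      · rw [if_neg (by omega), Finset.Icc_eq_empty (by omega),
          Finset.Icc_eq_empty (by omega)]
        simp
  have hTOp_eq : ∀ j, 1 ≤ j → TOp A x' (j+1) =
      ((((j:ℕ)+1:ℕ):ℝ) * (α (j+1) - α j)) • coc A 1 (j+1) z := by
    intro j hj
    have hstep : coc A 1 (j+1) z = A j (coc A 1 j z) := by rw [coc_succ A hj]; rfl
    have : x' (j+1) - A j (x' j) = (α (j+1) - α j) • coc A 1 (j+1) z := by
      show α (j+1) • coc A 1 (j+1) z - A j (α j • coc A 1 j z) = _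
      rw [map_smul, ← hstep, sub_smul]
    simp only [TOp, if_neg (by omega : ¬ j + 1 ≤ 1), Nat.add_sub_cancel, this,
      smul_smul]
  have hTb : ∀ i, 1 ≤ i → N i (TOp A x' i) ≤ 1 := by
    intro i hi
    rcases Nat.lt_or_ge i 2 with h2 | h2
    · have : i = 1 := by omega
      subst this
      simp [TOp, NF.zero hN (le_refl 1)]
    · obtain ⟨j, rfl⟩ : ∃ j, i = j + 1 := ⟨i - 1, by omega⟩
      have hj : 1 ≤ j := by omega
      rw [hTOp_eq j hj, NF.smul hN hi, hdiff j hj]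
      split_ifs with hcond
      · have hcpos : 0 < c (j+1) := hc (j+1) (by omega)
        have hj1 : (0:ℝ) < (j:ℝ)+1 := by positivity
        have : ((((j:ℕ)+1:ℕ)):ℝ) * (1/(((j:ℝ)+1) * c (j+1))) = 1 / c (j+1) := by
          push_cast
          field_simp
        rw [this, abs_of_pos (by positivity)]
        rw [one_div_mul_cancel (ne_of_gt hcpos)]
      · simp
  have hT1 : TOp A x' 1 = 0 := by simp [TOp]
  have hev : ∀ i, max k K < i → x' i = 0 := by
    intro i hi
    have h1 : max i k = i := max_eq_left (by omega)
    have : α i = 0 := by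
      simp only [hα, h1, Finset.Icc_eq_empty (by omega : ¬ i + 1 ≤ K)]
      simp
    show α i • coc A 1 i z = 0
    rw [this, zero_smul]
  have hDx : MemD A N (Z : Set X) x' := by
    refine ⟨⟨?_, ?_⟩, ⟨1, hTb⟩⟩
    · show α 1 • coc A 1 1 z ∈ Z
      rw [coc_self]
      exact Z.smul_mem _ hz
    · refine ⟨∑ i ∈ Finset.Icc 1 (max k K), N i (x' i), fun i hi => ?_⟩
      by_cases hik : i ≤ max k K
      · exact Finset.single_le_sum
          (fun p hp => NF.nonneg hN (Finset.mem_Icc.mp hp).1 (x' p))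
          (Finset.mem_Icc.mpr ⟨hi, hik⟩)
      · rw [hev i (by omega), NF.zero hN hi]
        exact Finset.sum_nonneg fun p hp => NF.nonneg hN (Finset.mem_Icc.mp hp).1 (x' p)
  have hbound := hinv.2.2 (TOp A x') x' ⟨hT1, ⟨1, hTb⟩⟩ hDx (fun _ _ => rfl) 1 hTb k hk
  have hsum_nonneg : 0 ≤ ∑ j ∈ Finset.Icc (k+1) K, 1/((j:ℝ) * c j) := by
    refine Finset.sum_nonneg fun j hj => ?_
    have hj1 : 1 ≤ j := by have := (Finset.mem_Icc.mp hj).1; omega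
    have := hc j hj1
    positivity
  have hxk : N k (x' k) = (∑ j ∈ Finset.Icc (k+1) K, 1/((j:ℝ) * c j)) * c k := by
    show N k (α k • coc A 1 k z) = _
    rw [NF.smul hN hk]
    have : α k = -∑ j ∈ Finset.Icc (k+1) K, 1/((j:ℝ) * c j) := by
      simp only [hα, max_self]
    rw [this, abs_neg, abs_of_nonneg hsum_nonneg]
  rw [hxk] at hbound
  rw [mul_one] at hbound
  calc c k * ∑ j ∈ Finset.Icc (k+1) K, 1/((j:ℝ) * c j)
      = (∑ j ∈ Finset.Icc (k+1) K, 1/((j:ℝ) * c j)) * c k := by ring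
    _ ≤ κ := hbound

end Key
/-- if `T_Z` is invertible and the growth bound holds, then there exist
`D, λ > 0` with `‖𝓐(m,n)x‖_m ≥ (1/D)(m/n)^{λ}‖x‖_n` for all `m ≥ n` and
`x ∈ Z(n) = 𝓐(n,1)Z`. -/
theorem stmt11 [CompleteSpace X] (A : ℕ → X →L[ℝ] X) (N : ℕ → X → ℝ)
    (hN : NormFamily N) (Z : Submodule ℝ X) (hZ : IsClosed (Z : Set X))
    (κ : ℝ) (hinv : TInv A N (Z : Set X) κ)
    (M a : ℝ) (hM : 0 < M) (ha : 0 < a) (hgrow : Grow A N M a) :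
    ∃ D lam : ℝ, 0 < D ∧ 0 < lam ∧
      ∀ m n, 1 ≤ n → n ≤ m → ∀ x ∈ Zs A (Z : Set X) n,
        (1 / D) * (((m : ℝ) / (n : ℝ)) ^ lam) * N n x ≤ N m (coc A n m x) := by
  set κ' : ℝ := max κ 1 with hκ'
  have hκ1 : (1:ℝ) ≤ κ' := le_max_right _ _
  have hκ0 : (0:ℝ) < κ' := lt_of_lt_of_le one_pos hκ1
  set t : ℝ := (2:ℝ) ^ a with ht
  have ht0 : 0 < t := Real.rpow_pos_of_pos two_pos a
  set lam : ℝ := 1/(2*κ') with hlam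
  have hlam0 : 0 < lam := by positivity
  have hlam1 : lam ≤ 1 := by
    rw [hlam, div_le_one (by positivity)]
    linarith
  refine ⟨2*κ'*M*t, lam, by positivity, hlam0, ?_⟩
  intro m n hn hnm x hx
  obtain ⟨z, hzZ, rfl⟩ := hx
  have hm1 : 1 ≤ m := hn.trans hnm
  have hn0 : (0:ℝ) < (n:ℝ) := by exact_mod_cast hn
  have hm0 : (0:ℝ) < (m:ℝ) := by exact_mod_cast hm1
  set c : ℕ → ℝ := fun j => N j (coc A 1 j z) with hcdef
  have hcoc : coc A n m (coc A 1 n z) = coc A 1 m z := coc_comp A hn hnm z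
  rcases (NF.nonneg hN hn (coc A 1 n z)).lt_or_eq with h0 | h0
  swap
  · rw [← h0, mul_zero]
    exact NF.nonneg hN hm1 _
  have hne : N n (coc A 1 n z) ≠ 0 := ne_of_gt h0
  have hcpos : ∀ j, 1 ≤ j → 0 < c j := orbit_pos hN A Z κ hinv hzZ hn hne
  have hkey : ∀ k K, 1 ≤ k → c k * ∑ j ∈ Finset.Icc (k+1) K, 1/((j:ℝ)*c j) ≤ κ' :=
    fun k K hk => le_trans (key_estimate hN A Z κ hinv hzZ hcpos k K hk) (le_max_left κ 1)
  set b : ℕ → ℝ := fun k => ∑ j ∈ Finset.Icc (k+1) (2*m), 1/((j:ℝ)*c j) with hb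
  have hbnn : ∀ k, 0 ≤ b k := by
    intro k
    refine Finset.sum_nonneg fun j hj => ?_
    have hj1 : 1 ≤ j := by have := (Finset.mem_Icc.mp hj).1; omega
    have := hcpos j hj1
    positivity
  have hbka : ∀ k, 1 ≤ k → c k * b k ≤ κ' := fun k hk => hkey k (2*m) hk
  -- growth estimate on c
  have hgrowc : ∀ j, m ≤ j → j ≤ 2*m → c j ≤ t * M * c m := by
    intro j hmj hj2
    have hG := hgrow j m hm1 hmj (coc A 1 m z)
    rw [coc_comp A hm1 hmj] at hG
    have hj2' : (j:ℝ)/(m:ℝ) ≤ 2 := by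
      rw [div_le_iff₀ hm0]
      exact_mod_cast hj2
    have hpow : ((j:ℝ)/(m:ℝ)) ^ a ≤ t :=
      Real.rpow_le_rpow (by positivity) hj2' ha.le
    have hcm : 0 ≤ c m := (hcpos m hm1).le
    have h1 : M * (((j:ℝ)/(m:ℝ)) ^ a) * c m ≤ M * t * c m :=
      mul_le_mul_of_nonneg_right (mul_le_mul_of_nonneg_left hpow hM.le) hcm
    have h2 : M * t * c m = t * M * c m := by ring
    linarith
  have hbm : 1/(2*(t*M)*c m) ≤ b m := by
    have hcm : 0 < c m := hcpos m hm1
    have hterm : ∀ j ∈ Finset.Icc (m+1) (2*m),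
        1/((2*(m:ℝ))*(t*M*c m)) ≤ 1/((j:ℝ)*c j) := by
      intro j hj
      obtain ⟨hj1, hj2⟩ := Finset.mem_Icc.mp hj
      have hj1' : 1 ≤ j := by omega
      have hcj : 0 < c j := hcpos j hj1'
      have hjle : (j:ℝ) ≤ 2*(m:ℝ) := by exact_mod_cast hj2
      have hjpos : (0:ℝ) < (j:ℝ) := by exact_mod_cast hj1'
      have hgj := hgrowc j (by omega) hj2
      apply one_div_le_one_div_of_le (by positivity)
      exact mul_le_mul hjle hgj hcj.le (by positivity)
    have hcard : (Finset.Icc (m+1) (2*m)).card = m := by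
      rw [Nat.card_Icc]; omega
    have hs := Finset.card_nsmul_le_sum (Finset.Icc (m+1) (2*m))
      (fun j => 1/((j:ℝ)*c j)) (1/((2*(m:ℝ))*(t*M*c m))) hterm
    rw [hcard, nsmul_eq_mul] at hs
    have heq : 1/(2*(t*M)*c m) = (m:ℝ) * (1/((2*(m:ℝ))*(t*M*c m))) := by
      field_simp
    rw [heq]
    exact hs
  -- chain estimate
  have hchain : ∀ k, n ≤ k → k ≤ m → ((k:ℝ)/(n:ℝ))^lam * b k ≤ b n := by
    intro k hnk hkm
    induction k, hnk using Nat.le_induction with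
    | base => rw [div_self (ne_of_gt hn0), Real.one_rpow, one_mul]
    | succ k hk ih =>
        have hkm' : k ≤ m := by omega
        have hk1 : 1 ≤ k := le_trans hn hk
        have hk0 : (0:ℝ) < (k:ℝ) := by exact_mod_cast hk1
        have hkm2 : k + 1 ≤ 2*m := by omega
        -- split b k
        have hsplit : b k = 1/(((k:ℝ)+1)*c (k+1)) + b (k+1) := by
          show (∑ j ∈ Finset.Icc (k+1) (2*m), 1/((j:ℝ)*c j)) = _
          have hins : Finset.Icc (k+1) (2*m) = insert (k+1) (Finset.Icc (k+2) (2*m)) := by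
            ext q; simp only [Finset.mem_Icc, Finset.mem_insert]; omega
          rw [hins, Finset.sum_insert (by simp)]
          push_cast
          rfl
        have hck1 : 0 < c (k+1) := hcpos (k+1) (by omega)
        have hb1 : c (k+1) * b (k+1) ≤ κ' := hbka (k+1) (by omega)
        have hstep : (1 + 1/(((k:ℝ)+1)*κ')) * b (k+1) ≤ b k := by
          rw [hsplit]
          have hp : (0:ℝ) < (k:ℝ)+1 := by positivity
          have h' : b (k+1) / (((k:ℝ)+1)*κ') ≤ 1/(((k:ℝ)+1)*c (k+1)) := by
            rw [div_le_div_iff₀ (by positivity) (by positivity)]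
            nlinarith [hbnn (k+1)]
          have : (1 + 1/(((k:ℝ)+1)*κ')) * b (k+1)
              = b (k+1) / (((k:ℝ)+1)*κ') + b (k+1) := by ring
          rw [this]
          linarith
        have hbern : (((k:ℝ)+1)/(k:ℝ))^lam ≤ 1 + 1/(((k:ℝ)+1)*κ') := by
          have h1 : ((k:ℝ)+1)/(k:ℝ) = 1 + 1/(k:ℝ) := by field_simp
          rw [h1]
          calc (1+1/(k:ℝ))^lam ≤ 1 + lam*(1/(k:ℝ)) :=
                rpow_one_add_le_one_add_mul_self
                  (le_trans (by norm_num : (-1:ℝ) ≤ 0) (by positivity)) hlam0.le hlam1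
            _ ≤ 1 + 1/(((k:ℝ)+1)*κ') := by
                have hkk : (1:ℝ) ≤ (k:ℝ) := by exact_mod_cast hk1
                have h2 : lam*(1/(k:ℝ)) ≤ 1/(((k:ℝ)+1)*κ') := by
                  rw [hlam, div_mul_div_comm, one_mul]
                  apply one_div_le_one_div_of_le (by positivity)
                  nlinarith
                linarith
        have hfact : ((↑(k+1):ℝ)/(n:ℝ))^lam
            = ((k:ℝ)/(n:ℝ))^lam * ((((k:ℝ)+1)/(k:ℝ))^lam) := by
          rw [← Real.mul_rpow (by positivity) (by positivity)]
          congr 1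
          push_cast
          field_simp
        calc ((↑(k+1):ℝ)/(n:ℝ))^lam * b (k+1)
            = ((k:ℝ)/(n:ℝ))^lam * (((((k:ℝ)+1)/(k:ℝ))^lam) * b (k+1)) := by
              rw [hfact]; ring
          _ ≤ ((k:ℝ)/(n:ℝ))^lam * b k := by
              apply mul_le_mul_of_nonneg_left _ (Real.rpow_nonneg (by positivity) _)
              calc ((((k:ℝ)+1)/(k:ℝ))^lam) * b (k+1)
                  ≤ (1 + 1/(((k:ℝ)+1)*κ')) * b (k+1) :=
                    mul_le_mul_of_nonneg_right hbern (hbnn (k+1))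
                _ ≤ b k := hstep
          _ ≤ b n := ih hkm'
  -- combine
  have h1 : c n * b n ≤ κ' := hbka n hn
  have h2 : ((m:ℝ)/(n:ℝ))^lam * b m ≤ b n := hchain m hnm le_rfl
  have hcm : 0 < c m := hcpos m hm1
  set r : ℝ := ((m:ℝ)/(n:ℝ))^lam with hr
  have hr0 : 0 < r := Real.rpow_pos_of_pos (by positivity) _
  have hA : c n * (r * (1/(2*(t*M)*c m))) ≤ κ' := by
    have : c n * (r * (1/(2*(t*M)*c m))) ≤ c n * (r * b m) := by
      apply mul_le_mul_of_nonneg_left _ h0.le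
      exact mul_le_mul_of_nonneg_left hbm hr0.le
    calc c n * (r * (1/(2*(t*M)*c m))) ≤ c n * (r * b m) := this
      _ ≤ c n * b n := mul_le_mul_of_nonneg_left h2 h0.le
      _ ≤ κ' := h1
  -- deduce goal
  have hQ : (0:ℝ) < 2*(t*M)*c m := by positivity
  have hfin : c n * r ≤ κ' * (2*(t*M)*c m) := by
    have := mul_le_mul_of_nonneg_right hA hQ.le
    calc c n * r = c n * (r * (1/(2*(t*M)*c m))) * (2*(t*M)*c m) := by
          field_simp
      _ ≤ κ' * (2*(t*M)*c m) := this
  show (1/(2*κ'*M*t)) * r * N n (coc A 1 n z) ≤ N m (coc A n m (coc A 1 n z))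
  rw [hcoc]
  show (1/(2*κ'*M*t)) * r * c n ≤ c m
  rw [div_mul_eq_mul_div, div_mul_eq_mul_div, div_le_iff₀ (by positivity)]
  nlinarith
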